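/- arXiv:1412.3676 — 3 statements merged into one kernel-verified Lean document; each statement's English description precedes it below -/
import Mathlib

section
/- Let D^Q assign to each pair of density matrices of any common finite size a value in ℝ ∪ {+∞}, and suppose: (i) whenever ρ1 and ρ2 commute and (p_i), (q_i) are their eigenvalues with respect to a common orthonormal eigenbasis, D^Q(ρ1‖ρ2) = Σ_i g(p_i, q_i); (ii) D^Q(Λ(ρ1)‖Λ(ρ2)) ≤ D^Q(ρ1‖ρ2) for every completely positive trace-preserving linear map Λ between matrix algebras. Then D_f^min(ρ1‖ρ2) ≤ D^Q(ρ1‖ρ2) for all density matrices ρ1, ρ2 of the same size. -/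
open Filter Matrix
open scoped ComplexOrder
open scoped BigOperators

noncomputable section

attribute [local instance] Classical.propDecidable

/-- The effective domain of an extended-real-valued function. -/
def edom (f : ℝ → EReal) : Set ℝ := {x | f x < ⊤}

/-- The convex conjugate `f*`(t) = sup_λ (t·λ − f(λ)). -/
def econj (f : ℝ → EReal) (t : ℝ) : EReal := ⨆ l : ℝ, ((t * l : ℝ) : EReal) - f l

/-- The function `g` associated to `f`, i.e. the lsc positively homogeneous
extension of `(λ1,λ2) ↦ λ2 f(λ1/λ2)`. -/
def gfun (f : ℝ → EReal) (l1 l2 : ℝ) : EReal :=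
  if l1 = 0 ∧ l2 = 0 then 0
  else if l1 ∈ edom f ∧ 0 < l2 then ((l2 : ℝ) : EReal) * f (l1 / l2)
  else if l1 ∈ edom f ∧ l2 = 0 then
    limUnder (nhdsWithin 0 (Set.Ioi 0)) fun u : ℝ => ((u : ℝ) : EReal) * f (l1 / u)
  else ⊤

/-- A finite-outcome POVM. -/
def IsPOVM {n m : ℕ} (M : Fin m → Matrix (Fin n) (Fin n) ℂ) : Prop :=
  (∀ x, (M x).PosSemidef) ∧ ∑ x, M x = 1

/-- The maximized measured f-divergence `D_f^min`. -/
def Dfmin (f : ℝ → EReal) {n : ℕ} (ρ1 ρ2 : Matrix (Fin n) (Fin n) ℂ) : EReal :=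
  ⨆ (m : ℕ) (M : Fin m → Matrix (Fin n) (Fin n) ℂ) (_ : IsPOVM M),
    ∑ x, gfun f ((ρ1 * M x).trace.re) ((ρ2 * M x).trace.re)

/-- Functional calculus on a Hermitian matrix: apply `h` to the eigenvalues. -/
def hermFC {k : ℕ} (h : ℝ → ℝ) {A : Matrix (Fin k) (Fin k) ℂ} (hA : A.IsHermitian) :
    Matrix (Fin k) (Fin k) ℂ :=
  (hA.eigenvectorUnitary : Matrix (Fin k) (Fin k) ℂ) *
    Matrix.diagonal (fun i => (h (hA.eigenvalues i) : ℂ)) *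
    (star (hA.eigenvectorUnitary : Matrix (Fin k) (Fin k) ℂ))

/-- The spectrum of the Hermitian matrix `A` is contained in `S`. -/
def specIn {k : ℕ} {A : Matrix (Fin k) (Fin k) ℂ} (hA : A.IsHermitian) (S : Set ℝ) : Prop :=
  ∀ i, hA.eigenvalues i ∈ S

/-- The Loewner order: `A ≤ B`. -/
def Loewner {k : ℕ} (A B : Matrix (Fin k) (Fin k) ℂ) : Prop := (B - A).PosSemidef

/-- Operator convexity of a real function on a set `S` (midpoint form, via
the functional calculus on Hermitian matrices with spectrum in `S`). -/
def OpConvexOn (h : ℝ → ℝ) (S : Set ℝ) : Prop :=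
  ∀ (k : ℕ), 1 ≤ k → ∀ (A B : Matrix (Fin k) (Fin k) ℂ)
    (hA : A.IsHermitian) (hB : B.IsHermitian) (hM : ((1/2 : ℂ) • (A + B)).IsHermitian),
    specIn hA S → specIn hB S →
    Loewner (hermFC h hM) ((1/2 : ℂ) • (hermFC h hA + hermFC h hB))

/-- The real-valued version of the convex conjugate of `f` (used for the
functional calculus; on `dom f*` it agrees with `f*` when `f` is proper). -/
def econjR (f : ℝ → EReal) (t : ℝ) : ℝ := (econj f t).toReal

/-- Condition (I): `f*` is operator convex on its effective domain. -/
def CondI (f : ℝ → EReal) : Prop := OpConvexOn (econjR f) (edom (econj f))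

/-- `f` is a proper lower semicontinuous convex function with `dom f ⊇ (0,∞)`. -/
structure NiceF (f : ℝ → EReal) : Prop where
  ne_bot : ∀ x, f x ≠ ⊥
  ne_top : ∃ x, f x ≠ ⊤
  lsc : LowerSemicontinuous f
  convex : ∀ x y a b : ℝ, 0 ≤ a → 0 ≤ b → a + b = 1 →
    f (a * x + b * y) ≤ ((a : ℝ) : EReal) * f x + ((b : ℝ) : EReal) * f y
  dom : Set.Ioi (0 : ℝ) ⊆ edom f

/-- A density matrix: positive semidefinite with trace one. -/
def IsDensity {n : ℕ} (ρ : Matrix (Fin n) (Fin n) ℂ) : Prop :=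
  ρ.PosSemidef ∧ ρ.trace = 1

/-- The blockwise extension `Λ ⊗ id_k` of a linear map on matrices. -/
def cpExt {n m : ℕ} (Λ : Matrix (Fin n) (Fin n) ℂ →ₗ[ℂ] Matrix (Fin m) (Fin m) ℂ) (k : ℕ)
    (M : Matrix (Fin n × Fin k) (Fin n × Fin k) ℂ) :
    Matrix (Fin m × Fin k) (Fin m × Fin k) ℂ :=
  Matrix.of fun p q => Λ (Matrix.of fun i j => M (i, p.2) (j, q.2)) p.1 q.1

/-- Completely positive trace preserving linear maps between matrix algebras. -/
def IsCPTP {n m : ℕ} (Λ : Matrix (Fin n) (Fin n) ℂ →ₗ[ℂ] Matrix (Fin m) (Fin m) ℂ) : Prop :=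
  (∀ A, (Λ A).trace = A.trace) ∧
  ∀ (k : ℕ) (M : Matrix (Fin n × Fin k) (Fin n × Fin k) ℂ),
    M.PosSemidef → (cpExt Λ k M).PosSemidef

/-- `D^Q` coincides with the classical f-divergence on commuting pairs of density
matrices (i.e. pairs that are simultaneously unitarily diagonalizable with
eigenvalue lists `p`, `q` w.r.t. a common orthonormal eigenbasis). -/
def AgreesOnCommuting (f : ℝ → EReal)
    (DQ : (k : ℕ) → Matrix (Fin k) (Fin k) ℂ → Matrix (Fin k) (Fin k) ℂ → EReal) : Prop :=
  ∀ (k : ℕ) (U : Matrix.unitaryGroup (Fin k) ℂ) (p q : Fin k → ℝ),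
    (∀ i, 0 ≤ p i) → (∀ i, 0 ≤ q i) → ∑ i, p i = 1 → ∑ i, q i = 1 →
    DQ k ((U : Matrix (Fin k) (Fin k) ℂ) * Matrix.diagonal (fun i => ((p i : ℝ) : ℂ)) *
            star (U : Matrix (Fin k) (Fin k) ℂ))
         ((U : Matrix (Fin k) (Fin k) ℂ) * Matrix.diagonal (fun i => ((q i : ℝ) : ℂ)) *
            star (U : Matrix (Fin k) (Fin k) ℂ))
      = ∑ i, gfun f (p i) (q i)

/-- `D^Q` is monotone non-increasing under CPTP maps (on density matrices). -/
def CPTPMonotone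
    (DQ : (k : ℕ) → Matrix (Fin k) (Fin k) ℂ → Matrix (Fin k) (Fin k) ℂ → EReal) : Prop :=
  ∀ (n m : ℕ) (Λ : Matrix (Fin n) (Fin n) ℂ →ₗ[ℂ] Matrix (Fin m) (Fin m) ℂ),
    IsCPTP Λ → ∀ ρ1 ρ2 : Matrix (Fin n) (Fin n) ℂ, IsDensity ρ1 → IsDensity ρ2 →
    DQ m (Λ ρ1) (Λ ρ2) ≤ DQ n ρ1 ρ2

/-!
Write each POVM element as `M x = C xᴴ * C x`. The measurement channel
`ρ ↦ diag (tr (ρ M x))ₓ` has Kraus operators `|x⟩⟨l| C x`, hence is completely positive, and it is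
trace preserving because `∑ₓ M x = 1`. On density matrices its outputs are diagonal probability
vectors, so by (i) `D^Q` of the outputs is `∑ₓ g (tr ρ1 M x, tr ρ2 M x)`, and by (ii) this is at
most `D^Q(ρ1‖ρ2)`. Taking the supremum over POVMs gives the claim.
-/

open scoped Kronecker

open scoped MatrixOrder in
theorem Matrix.PosSemidef.trace_mul_nonneg {ι : Type*} [Fintype ι] {A B : Matrix ι ι ℂ}
    (hA : A.PosSemidef) (hB : B.PosSemidef) : 0 ≤ (A * B).trace := by
  obtain ⟨C, rfl⟩ := CStarAlgebra.nonneg_iff_eq_star_mul_self.mp hB.nonneg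
  rw [← Matrix.mul_assoc, trace_mul_cycle, star_eq_conjTranspose]
  exact (hA.mul_mul_conjTranspose_same C).trace_nonneg

theorem IsPOVM.sum_re_trace_mul {n m : ℕ} {M : Fin m → Matrix (Fin n) (Fin n) ℂ} (hM : IsPOVM M)
    (ρ : Matrix (Fin n) (Fin n) ℂ) : ∑ x, (ρ * M x).trace.re = ρ.trace.re := by
  rw [← Complex.re_sum, ← trace_sum, ← Finset.mul_sum, hM.2, Matrix.mul_one]

section Kraus

variable {ι : Type*} [Fintype ι] {n m : ℕ} (K : ι → Matrix (Fin m) (Fin n) ℂ)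

def krausMap :
    Matrix (Fin n) (Fin n) ℂ →ₗ[ℂ] Matrix (Fin m) (Fin m) ℂ where
  toFun A := ∑ r, K r * A * (K r)ᴴ
  map_add' A B := by simp only [Matrix.mul_add, Matrix.add_mul, Finset.sum_add_distrib]
  map_smul' c A := by
    simp only [Matrix.mul_smul, Matrix.smul_mul, Finset.smul_sum, RingHom.id_apply]

lemma krausMap_apply (A : Matrix (Fin n) (Fin n) ℂ) :
    krausMap K A = ∑ r, K r * A * (K r)ᴴ := rfl

lemma cpExt_krausMap (k : ℕ) (P : Matrix (Fin n × Fin k) (Fin n × Fin k) ℂ) :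
    cpExt (krausMap K) k P =
      ∑ r, (K r ⊗ₖ (1 : Matrix (Fin k) (Fin k) ℂ)) * P *
        (K r ⊗ₖ (1 : Matrix (Fin k) (Fin k) ℂ))ᴴ := by
  ext p q
  simp only [cpExt, krausMap_apply, Matrix.sum_apply, Matrix.of_apply]
  refine Finset.sum_congr rfl fun r _ => ?_
  simp only [Matrix.mul_apply, Matrix.conjTranspose_apply, Matrix.kroneckerMap_apply,
    Matrix.one_apply, Matrix.of_apply, Fintype.sum_prod_type, Finset.sum_mul,
    apply_ite (star : ℂ → ℂ), star_zero, mul_ite, ite_mul, mul_one, mul_zero, zero_mul,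
    Finset.sum_ite_eq, Finset.mem_univ, if_true]

lemma cpExt_krausMap_posSemidef (k : ℕ) {P : Matrix (Fin n × Fin k) (Fin n × Fin k) ℂ}
    (hP : P.PosSemidef) : (cpExt (krausMap K) k P).PosSemidef := by
  rw [cpExt_krausMap]
  exact posSemidef_sum _ fun r _ => hP.mul_mul_conjTranspose_same _

end Kraus

section Measurement

variable {n m : ℕ}

/-- Kraus operators `|x⟩⟨l| C_x` of the measurement channel `ρ ↦ ∑ₓ tr(C_x ρ C_xᴴ) |x⟩⟨x|`. -/
def measurementKraus (C : Fin m → Matrix (Fin n) (Fin n) ℂ) (xl : Fin m × Fin n) :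
    Matrix (Fin m) (Fin n) ℂ :=
  single xl.1 xl.2 (1 : ℂ) * C xl.1

lemma krausMap_measurementKraus_apply (C : Fin m → Matrix (Fin n) (Fin n) ℂ)
    (A : Matrix (Fin n) (Fin n) ℂ) :
    krausMap (measurementKraus C) A = diagonal fun x => (A * ((C x)ᴴ * C x)).trace := by
  rw [krausMap_apply, Fintype.sum_prod_type, ← sum_single_eq_diagonal]
  refine Finset.sum_congr rfl fun x _ => ?_
  have hterm : ∀ l, measurementKraus C (x, l) * A * (measurementKraus C (x, l))ᴴ =
      single x x ((C x * A * (C x)ᴴ) l l) := fun l => by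
    simpa [measurementKraus, conjTranspose_mul, Matrix.mul_assoc] using
      single_mul_mul_single x l l x (1 : ℂ) (C x * A * (C x)ᴴ) 1
  rw [Finset.sum_congr rfl fun l _ => hterm l, ← Matrix.mul_assoc, trace_mul_cycle]
  ext i j
  simp only [Matrix.sum_apply, single_apply]
  split_ifs <;> simp [trace]

open scoped MatrixOrder in
theorem exists_isCPTP_eq_diagonal_trace {M : Fin m → Matrix (Fin n) (Fin n) ℂ} (hM : IsPOVM M) :
    ∃ Λ : Matrix (Fin n) (Fin n) ℂ →ₗ[ℂ] Matrix (Fin m) (Fin m) ℂ,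
      IsCPTP Λ ∧ ∀ ρ, Λ ρ = diagonal fun x => (ρ * M x).trace := by
  choose C hC using fun x => CStarAlgebra.nonneg_iff_eq_star_mul_self.mp (hM.1 x).nonneg
  have hΛ : ∀ ρ, krausMap (measurementKraus C) ρ = diagonal fun x => (ρ * M x).trace := by
    intro ρ
    simp only [krausMap_measurementKraus_apply, hC, star_eq_conjTranspose]
  refine ⟨krausMap (measurementKraus C), ⟨fun A => ?_, cpExt_krausMap_posSemidef _⟩, hΛ⟩
  rw [hΛ, trace_diagonal, ← trace_sum, ← Finset.mul_sum, hM.2, Matrix.mul_one]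

end Measurement

theorem stmt_3_general (f : ℝ → EReal)
    (DQ : (k : ℕ) → Matrix (Fin k) (Fin k) ℂ → Matrix (Fin k) (Fin k) ℂ → EReal)
    (hcomm : AgreesOnCommuting f DQ) (hmono : CPTPMonotone DQ)
    {n : ℕ} (ρ1 ρ2 : Matrix (Fin n) (Fin n) ℂ)
    (h1 : IsDensity ρ1) (h2 : IsDensity ρ2) :
    Dfmin f ρ1 ρ2 ≤ DQ n ρ1 ρ2 := by
  refine iSup_le fun m => iSup₂_le fun M hM => ?_
  obtain ⟨Λ, hΛ, hΛ_apply⟩ := exists_isCPTP_eq_diagonal_trace hM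
  have hprob_nonneg : ∀ ρ : Matrix (Fin n) (Fin n) ℂ, ρ.PosSemidef → ∀ x, 0 ≤ (ρ * M x).trace :=
    fun ρ hρ x => hρ.trace_mul_nonneg (hM.1 x)
  have hprob_sum : ∀ ρ : Matrix (Fin n) (Fin n) ℂ, IsDensity ρ → ∑ x, (ρ * M x).trace.re = 1 :=
    fun ρ hρ => by rw [hM.sum_re_trace_mul, hρ.2, Complex.one_re]
  have hΛ_diag : ∀ ρ : Matrix (Fin n) (Fin n) ℂ, ρ.PosSemidef →
      Λ ρ = ((1 : unitaryGroup (Fin m) ℂ) : Matrix (Fin m) (Fin m) ℂ) *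
        diagonal (fun x => (((ρ * M x).trace.re : ℝ) : ℂ)) *
        star ((1 : unitaryGroup (Fin m) ℂ) : Matrix (Fin m) (Fin m) ℂ) := fun ρ hρ => by
    rw [hΛ_apply, UnitaryGroup.one_val, star_one, Matrix.one_mul, Matrix.mul_one]
    exact congrArg diagonal <| funext fun x =>
      Complex.eq_re_of_ofReal_le (Complex.ofReal_zero ▸ hprob_nonneg ρ hρ x)
  calc _ = DQ m (Λ ρ1) (Λ ρ2) := by
        rw [hΛ_diag ρ1 h1.1, hΛ_diag ρ2 h2.1, hcomm m 1 _ _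
          (fun x => (Complex.nonneg_iff.mp (hprob_nonneg ρ1 h1.1 x)).1)
          (fun x => (Complex.nonneg_iff.mp (hprob_nonneg ρ2 h2.1 x)).1)
          (hprob_sum ρ1 h1) (hprob_sum ρ2 h2)]
    _ ≤ DQ n ρ1 ρ2 := hmono n m Λ hΛ ρ1 ρ2 h1 h2

/-- `D_f^min` is the least quantum extension of the f-divergence that is
monotone under CPTP maps. -/
theorem stmt_3 (f : ℝ → EReal) (hf : NiceF f)
    (DQ : (k : ℕ) → Matrix (Fin k) (Fin k) ℂ → Matrix (Fin k) (Fin k) ℂ → EReal)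
    (hcomm : AgreesOnCommuting f DQ) (hmono : CPTPMonotone DQ)
    {n : ℕ} (ρ1 ρ2 : Matrix (Fin n) (Fin n) ℂ)
    (h1 : IsDensity ρ1) (h2 : IsDensity ρ2) :
    Dfmin f ρ1 ρ2 ≤ DQ n ρ1 ρ2 :=
  stmt_3_general f DQ hcomm hmono ρ1 ρ2 h1 h2
end
end

section
/- On the cone of pairs (ρ1, ρ2) of positive semidefinite matrices of a fixed finite size, the function (ρ1, ρ2) ↦ D_f^min(ρ1‖ρ2) ∈ ℝ ∪ {+∞} is jointly convex (D_f^min(tρ1+(1−t)σ1 ‖ tρ2+(1−t)σ2) ≤ t·D_f^min(ρ1‖ρ2) + (1−t)·D_f^min(σ1‖σ2) for all t ∈ [0,1]), positively homogeneous (D_f^min(a·ρ1‖a·ρ2) = a·D_f^min(ρ1‖ρ2) for all a ≥ 0), nowhere equal to −∞, and lower semicontinuous. -/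
open Filter Matrix
open scoped ComplexOrder
open scoped BigOperators

noncomputable section

attribute [local instance] Classical.propDecidable

/-!
On the closed quadrant `g = gfun f` is the lower semicontinuous perspective of `f`: it is
positively homogeneous and subadditive, hence convex, and never `⊥`. Where `y > 0` this is the
convexity and lower semicontinuity of `f`. On the edge `y = 0` the defining limit exists because
`u ↦ u f(x/u)` is convex, lower semicontinuity there follows from homogeneity, and subadditivity
follows by approaching the edge from `y > 0`. At the origin, `f 1 = g(1,1) ≤ g q + g((1,1) - q)`
with the last term tending to `f 1` gives `liminf g ≥ 0`.

For a POVM `M`, `(ρ₁, ρ₂) ↦ (tr ρ₁Mₓ, tr ρ₂Mₓ)` is linear and maps positive semidefinite pairs into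
the quadrant, so each `∑ₓ g(tr ρ₁Mₓ, tr ρ₂Mₓ)` is subadditive, homogeneous and lower
semicontinuous, and these properties pass to the supremum `D_f^min`.
-/

open scoped Topology
open Set Function

namespace EReal

lemma coe_mul_sum {ι : Type*} (s : Finset ι) (g : ι → EReal) {a : ℝ} (ha : 0 ≤ a) :
    (a : EReal) * ∑ i ∈ s, g i = ∑ i ∈ s, (a : EReal) * g i :=
  map_sum (⟨⟨((a : EReal) * ·), mul_zero _⟩,
    left_distrib_of_nonneg_of_ne_top (EReal.coe_nonneg.2 ha) (coe_ne_top a)⟩ : EReal →+ EReal) g s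

lemma sum_ne_bot {ι : Type*} {s : Finset ι} {g : ι → EReal} (h : ∀ i ∈ s, g i ≠ ⊥) :
    ∑ i ∈ s, g i ≠ ⊥ :=
  Finset.sum_induction g (· ≠ ⊥) (fun _ _ ha hb => add_ne_bot_iff.2 ⟨ha, hb⟩) zero_ne_bot h

lemma tendsto_coe_mul {α : Type*} {l : Filter α} {v : α → ℝ} {w : α → EReal} {b : ℝ}
    {L : EReal} (hb : b ≠ 0) (hv : Tendsto v l (𝓝 b)) (hw : Tendsto w l (𝓝 L)) :
    Tendsto (fun z => (v z : EReal) * w z) l (𝓝 (b * L)) :=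
  (continuousAt_mul (by simp [hb]) (by simp [hb]) (by simp) (by simp)).tendsto.comp
    ((tendsto_coe.2 hv).prodMk_nhds hw)

lemma lowerSemicontinuousWithinAt_sum {α ι : Type*} [TopologicalSpace α] {s : Set α} {x : α}
    {t : Finset ι} {g : ι → α → EReal} (hg : ∀ i ∈ t, LowerSemicontinuousWithinAt (g i) s x)
    (hx : ∀ i ∈ t, g i x ≠ ⊥) : LowerSemicontinuousWithinAt (fun y => ∑ i ∈ t, g i y) s x := by
  classical
  induction t using Finset.induction_on with
  | empty => simpa using lowerSemicontinuousWithinAt_const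
  | insert a t ha ih =>
    simp only [Finset.sum_insert ha]
    refine (hg a (t.mem_insert_self a)).add' (ih (fun i hi => hg i (t.mem_insert_of_mem hi))
      fun i hi => hx i (t.mem_insert_of_mem hi)) ?_
    exact continuousAt_add (.inr (sum_ne_bot fun i hi => hx i (t.mem_insert_of_mem hi)))
      (.inl (hx a (t.mem_insert_self a)))

end EReal

lemma LowerSemicontinuousWithinAt.coe_mul {α : Type*} [TopologicalSpace α] {s : Set α} {x : α}
    {v : α → ℝ} {w : α → EReal} (hv : ContinuousWithinAt v s x) (hvx : 0 < v x)
    (hw : LowerSemicontinuousWithinAt w s x) (hwx : w x ≠ ⊥) :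
    LowerSemicontinuousWithinAt (fun z => (v z : EReal) * w z) s x := by
  intro c hc
  have hmul : ContinuousAt (fun p : EReal × EReal => p.1 * p.2) (v x, w x) :=
    EReal.continuousAt_mul (by simp [hvx.ne']) (by simp [hvx.ne']) (by simp) (by simp)
  obtain ⟨U, hU, V, hV, hUV⟩ := mem_nhds_prod_iff.1 (hmul (isOpen_Ioi.mem_nhds hc))
  obtain ⟨r, hr, hrV⟩ := exists_Ioc_subset_of_mem_nhds hV ⟨⊥, bot_lt_iff_ne_bot.2 hwx⟩
  have hvU : ∀ᶠ z in 𝓝[s] x, (v z : EReal) ∈ U ∧ 0 < v z :=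
    ((EReal.continuous_coe_iff.2 continuous_id).continuousAt.comp_continuousWithinAt hv
      |>.eventually_mem hU).and (hv.eventually (lt_mem_nhds hvx))
  filter_upwards [hvU, hw r hr] with z ⟨hzU, hz0⟩ hzr
  calc c < v z * min (w z) (w x) := hUV (mk_mem_prod hzU (hrV ⟨lt_min hzr hr, min_le_right _ _⟩))
    _ ≤ v z * w z := mul_le_mul_of_nonneg_left (min_le_left _ _) (by exact_mod_cast hz0.le)

theorem ConvexOn.exists_tendsto_nhdsGT {h : ℝ → ℝ} {a b : ℝ} (hab : a < b)
    (hh : ConvexOn ℝ (Ioo a b) h) :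
    ∃ L : EReal, L ≠ ⊥ ∧ Tendsto (fun u => (h u : EReal)) (𝓝[>] a) (𝓝 L) := by
  obtain ⟨c, hac, hcb⟩ := exists_between hab
  -- `h u = h c + (u - c) * φ u` with `φ` monotone, so `φ` has a limit in `[-∞, ∞)`
  set φ : ℝ → EReal := fun u => ((h u - h c) / (u - c) : ℝ)
  have hφ : MonotoneOn φ (Ioo a c) := fun u hu v hv huv =>
    EReal.coe_le_coe_iff.2 <| hh.secant_mono ⟨hac, hcb⟩ ⟨hu.1, hu.2.trans hcb⟩
      ⟨hv.1, hv.2.trans hcb⟩ hu.2.ne hv.2.ne huv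
  obtain ⟨m, hm⟩ : (Ioo a c).Nonempty := nonempty_Ioo.2 hac
  have hlim := hφ.tendsto_nhdsWithin_Ioo_right ⟨m, hm⟩ (OrderBot.bddBelow _)
  have hne_top : sInf (φ '' Ioo a c) ≠ ⊤ :=
    ne_top_of_le_ne_top (EReal.coe_ne_top _) (sInf_le (mem_image_of_mem φ hm))
  have hprod := EReal.tendsto_coe_mul (sub_ne_zero.2 hac.ne)
    ((tendsto_id.sub_const c).mono_left nhdsWithin_le_nhds) hlim
  have hsum : Tendsto (fun u => (h c : EReal) + ((u - c : ℝ) : EReal) * φ u) (𝓝[>] a)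
      (𝓝 ((h c : EReal) + ((a - c : ℝ) : EReal) * sInf (φ '' Ioo a c))) :=
    (EReal.continuousAt_add (.inl (EReal.coe_ne_top _)) (.inl (EReal.coe_ne_bot _))).tendsto.comp
      (tendsto_const_nhds.prodMk_nhds hprod)
  refine ⟨_, EReal.add_ne_bot_iff.2 ⟨EReal.coe_ne_bot _, ?_⟩, hsum.congr' ?_⟩
  · have hneg : ((a - c : ℝ) : EReal) < 0 := EReal.coe_lt_coe_iff.2 (sub_neg.2 hac)
    rw [Ne, EReal.mul_eq_bot]
    rintro (⟨h1, -⟩ | ⟨h1, -⟩ | ⟨h1, -⟩ | ⟨-, h1⟩)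
    exacts [EReal.coe_ne_bot _ h1, hneg.not_gt h1, EReal.coe_ne_top _ h1, hne_top h1]
  · filter_upwards [Ioo_mem_nhdsGT hac] with u hu
    simp only [φ]
    rw [← EReal.coe_mul, mul_div_cancel₀ _ (sub_ne_zero.2 hu.2.ne), ← EReal.coe_add,
      add_sub_cancel]

lemma ConvexOn.perspective_Ioi {F : ℝ → ℝ} (hF : ConvexOn ℝ (Ioi 0) F) {x : ℝ} (hx : 0 < x) :
    ConvexOn ℝ (Ioi 0) fun u => u * F (x / u) := by
  refine ⟨convex_Ioi 0, fun u (hu : 0 < u) v (hv : 0 < v) a b ha hb hab => ?_⟩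
  have hw : 0 < a * u + b * v := by simpa using (convex_Ioi (0 : ℝ)) hu hv ha hb hab
  have hkey := hF.2 (div_pos hx hu) (div_pos hx hv) (div_nonneg (mul_nonneg ha hu.le) hw.le)
    (div_nonneg (mul_nonneg hb hv.le) hw.le)
    (by field_simp : a * u / (a * u + b * v) + b * v / (a * u + b * v) = 1)
  have harg : a * u / (a * u + b * v) * (x / u) + b * v / (a * u + b * v) * (x / v) =
      x / (a * u + b * v) := by
    field_simp
    linear_combination hab
  simp only [smul_eq_mul, harg] at hkey ⊢
  calc (a * u + b * v) * F (x / (a * u + b * v))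
      ≤ (a * u + b * v) * (a * u / (a * u + b * v) * F (x / u) +
          b * v / (a * u + b * v) * F (x / v)) := mul_le_mul_of_nonneg_left hkey hw.le
    _ = a * (u * F (x / u)) + b * (v * F (x / v)) := by field_simp

lemma gfun_zero_zero {f : ℝ → EReal} : gfun f 0 0 = 0 := if_pos ⟨rfl, rfl⟩

namespace NiceF

variable {f : ℝ → EReal}

lemma coe_toReal (hf : NiceF f) {x : ℝ} (hx : 0 < x) : ((f x).toReal : EReal) = f x :=
  EReal.coe_toReal (hf.dom hx).ne (hf.ne_bot x)

lemma convexOn_toReal (hf : NiceF f) : ConvexOn ℝ (Ioi 0) fun x => (f x).toReal := by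
  refine ⟨convex_Ioi 0, fun x (hx : 0 < x) y (hy : 0 < y) a b ha hb hab => ?_⟩
  have hz : 0 < a * x + b * y := by simpa using (convex_Ioi (0 : ℝ)) hx hy ha hb hab
  have h := hf.convex x y a b ha hb hab
  rw [← hf.coe_toReal hx, ← hf.coe_toReal hy, ← hf.coe_toReal hz] at h
  exact_mod_cast h

lemma gfun_of_pos (hf : NiceF f) {x y : ℝ} (hx : 0 ≤ x) (hy : 0 < y) :
    gfun f x y = y * f (x / y) := by
  rw [gfun, if_neg fun h => hy.ne' h.2]
  by_cases hdom : x ∈ edom f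
  · rw [if_pos ⟨hdom, hy⟩]
  · obtain rfl : x = 0 := hx.eq_or_lt.resolve_right (fun h => hdom (hf.dom h)) |>.symm
    have hf0 : f 0 = ⊤ := by simpa [edom] using hdom
    rw [if_neg fun h => hdom h.1, if_neg fun h => hdom h.1, zero_div, hf0,
      EReal.coe_mul_top_of_pos hy]

lemma exists_tendsto_perspective (hf : NiceF f) {x : ℝ} (hx : 0 < x) :
    ∃ L : EReal, L ≠ ⊥ ∧ Tendsto (fun u : ℝ => (u : EReal) * f (x / u)) (𝓝[>] 0) (𝓝 L) := by
  obtain ⟨L, hL, hT⟩ := ((hf.convexOn_toReal.perspective_Ioi hx).subset Ioo_subset_Ioi_self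
    (convex_Ioo 0 1)).exists_tendsto_nhdsGT one_pos
  refine ⟨L, hL, hT.congr' ?_⟩
  filter_upwards [self_mem_nhdsWithin] with u (hu : 0 < u)
  rw [EReal.coe_mul, hf.coe_toReal (div_pos hx hu)]

lemma tendsto_perspective_gfun_zero (hf : NiceF f) {x : ℝ} (hx : 0 < x) :
    Tendsto (fun u : ℝ => (u : EReal) * f (x / u)) (𝓝[>] 0) (𝓝 (gfun f x 0)) := by
  rw [gfun, if_neg fun h => hx.ne' h.1, if_neg fun h => lt_irrefl 0 h.2, if_pos ⟨hf.dom hx, rfl⟩]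
  obtain ⟨L, -, hT⟩ := hf.exists_tendsto_perspective hx
  exact tendsto_nhds_limUnder ⟨L, hT⟩

lemma gfun_zero_ne_bot (hf : NiceF f) {x : ℝ} (hx : 0 < x) : gfun f x 0 ≠ ⊥ := by
  obtain ⟨L, hL, hT⟩ := hf.exists_tendsto_perspective hx
  rwa [tendsto_nhds_unique (hf.tendsto_perspective_gfun_zero hx) hT]

lemma tendsto_gfun_nhdsGT (hf : NiceF f) {x : ℝ} (hx : 0 < x) :
    Tendsto (gfun f x) (𝓝[>] 0) (𝓝 (gfun f x 0)) := by
  refine (hf.tendsto_perspective_gfun_zero hx).congr' ?_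
  filter_upwards [self_mem_nhdsWithin] with u hu
  exact (hf.gfun_of_pos hx.le hu).symm

lemma gfun_ne_bot (hf : NiceF f) {x y : ℝ} (hx : 0 ≤ x) (hy : 0 ≤ y) : gfun f x y ≠ ⊥ := by
  rcases hy.eq_or_lt with rfl | hy
  · rcases hx.eq_or_lt with rfl | hx
    · simp [gfun_zero_zero]
    · exact hf.gfun_zero_ne_bot hx
  · rw [hf.gfun_of_pos hx hy, Ne, EReal.mul_eq_bot]
    simp [hf.ne_bot, hy, hy.not_gt]

lemma gfun_mul (hf : NiceF f) {a x y : ℝ} (ha : 0 ≤ a) (hx : 0 ≤ x) (hy : 0 ≤ y) :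
    gfun f (a * x) (a * y) = a * gfun f x y := by
  rcases ha.eq_or_lt with rfl | ha
  · simp [gfun_zero_zero]
  have hpos : ∀ {x y : ℝ}, 0 ≤ x → 0 < y → gfun f (a * x) (a * y) = a * gfun f x y :=
    fun hx hy => by
      rw [hf.gfun_of_pos (mul_nonneg ha.le hx) (mul_pos ha hy), hf.gfun_of_pos hx hy,
        mul_div_mul_left _ _ ha.ne', EReal.coe_mul, mul_assoc]
  rcases hy.eq_or_lt with rfl | hy
  · rcases hx.eq_or_lt with rfl | hx
    · simp [gfun_zero_zero]
    have hscale : Tendsto (a * ·) (𝓝[>] (0 : ℝ)) (𝓝[>] 0) :=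
      tendsto_iff_comap.2 (comap_mulLeft_nhdsGT_zero ha).ge
    rw [mul_zero]
    refine tendsto_nhds_unique ((hf.tendsto_gfun_nhdsGT (mul_pos ha hx)).comp hscale) ?_
    refine (EReal.tendsto_coe_mul ha.ne' tendsto_const_nhds (hf.tendsto_gfun_nhdsGT hx)).congr' ?_
    filter_upwards [self_mem_nhdsWithin] with u (hu : 0 < u)
    exact (hpos hx.le hu).symm
  · exact hpos hx hy

lemma lowerSemicontinuousWithinAt_gfun_of_snd_pos (hf : NiceF f) {q : ℝ × ℝ} (hq : 0 ≤ q)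
    (hq₂ : 0 < q.2) : LowerSemicontinuousWithinAt (uncurry (gfun f)) (Ici 0) q := by
  have hdiv : LowerSemicontinuousWithinAt (fun p : ℝ × ℝ => f (p.1 / p.2)) (Ici 0) q :=
    LowerSemicontinuousAt.lowerSemicontinuousWithinAt _ <|
      (hf.lsc _).comp (continuousAt_fst.div continuousAt_snd hq₂.ne')
  refine (LowerSemicontinuousWithinAt.coe_mul continuous_snd.continuousWithinAt hq₂ hdiv
    (hf.ne_bot _)).congr_of_eventuallyEq hq ?_
  filter_upwards [self_mem_nhdsWithin,
    (continuousAt_snd.eventually (lt_mem_nhds hq₂)).filter_mono nhdsWithin_le_nhds]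
    with p (hp : 0 ≤ p) hp₂
  exact (hf.gfun_of_pos hp.1 hp₂).symm

lemma lowerSemicontinuousWithinAt_gfun_of_snd_eq_zero (hf : NiceF f) {a : ℝ} (ha : 0 < a) :
    LowerSemicontinuousWithinAt (uncurry (gfun f)) (Ici 0) (a, 0) := by
  -- near `(a, 0)`, homogeneity moves the first coordinate back to `a`
  have hrescale : ContinuousWithinAt (fun p : ℝ × ℝ => a * p.2 / p.1) (Ici 0) (a, 0) :=
    (continuous_const.mul continuous_snd).continuousWithinAt.div
      continuous_fst.continuousWithinAt ha.ne'
  have hedge : ContinuousWithinAt (gfun f a) (Ici 0) 0 :=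
    continuousWithinAt_Ioi_iff_Ici.1 (hf.tendsto_gfun_nhdsGT ha)
  have hcomp : LowerSemicontinuousWithinAt (fun p : ℝ × ℝ => gfun f a (a * p.2 / p.1)) (Ici 0)
      (a, 0) :=
    (hedge.comp_of_eq hrescale (fun p (hp : 0 ≤ p) => div_nonneg (mul_nonneg ha.le hp.2) hp.1)
      (by simp)).lowerSemicontinuousWithinAt
  refine (LowerSemicontinuousWithinAt.coe_mul (continuous_fst.div_const a).continuousWithinAt
    (div_pos ha ha) hcomp (by simpa using hf.gfun_zero_ne_bot ha))
    |>.congr_of_eventuallyEq ⟨ha.le, le_rfl⟩ ?_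
  filter_upwards [self_mem_nhdsWithin,
    (continuousAt_fst.eventually (lt_mem_nhds ha)).filter_mono nhdsWithin_le_nhds]
    with p (hp : 0 ≤ p) (hp₁ : 0 < p.1)
  have h := hf.gfun_mul (div_nonneg hp₁.le ha.le) ha.le
    (div_nonneg (mul_nonneg ha.le hp.2) hp₁.le)
  have hp₂ : p.1 / a * (a * p.2 / p.1) = p.2 := by field_simp
  rw [div_mul_cancel₀ _ ha.ne', hp₂] at h
  exact h.symm

lemma lowerSemicontinuousWithinAt_gfun_of_ne_zero (hf : NiceF f) {q : ℝ × ℝ} (hq : 0 ≤ q)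
    (hq₀ : q ≠ 0) : LowerSemicontinuousWithinAt (uncurry (gfun f)) (Ici 0) q := by
  obtain ⟨a, b⟩ := q
  obtain ⟨ha, hb⟩ : 0 ≤ a ∧ 0 ≤ b := hq
  rcases hb.eq_or_lt with rfl | hb
  · exact hf.lowerSemicontinuousWithinAt_gfun_of_snd_eq_zero <|
      ha.lt_of_ne fun ha => hq₀ (by simp [← ha])
  · exact hf.lowerSemicontinuousWithinAt_gfun_of_snd_pos ⟨ha, hb.le⟩ hb

lemma exists_tendsto_gfun_of_pos (hf : NiceF f) {x y : ℝ} (hx : 0 ≤ x) (hy : 0 ≤ y)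
    (hxy : (x, y) ≠ 0) :
    ∃ p : ℝ → ℝ, (∀ u > 0, 0 < p u) ∧ Tendsto p (𝓝[>] 0) (𝓝 y) ∧
      Tendsto (fun u => gfun f x (p u)) (𝓝[>] 0) (𝓝 (gfun f x y)) := by
  rcases hy.eq_or_lt with rfl | hy
  · have hx : 0 < x := hx.lt_of_ne fun h => hxy (by simp [← h])
    exact ⟨id, fun _ => id, nhdsWithin_le_nhds, hf.tendsto_gfun_nhdsGT hx⟩
  · exact ⟨fun _ => y, fun _ _ => hy, tendsto_const_nhds, tendsto_const_nhds⟩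

lemma gfun_add_le_of_pos (hf : NiceF f) {x₁ y₁ x₂ y₂ : ℝ} (hx₁ : 0 ≤ x₁) (hy₁ : 0 < y₁)
    (hx₂ : 0 ≤ x₂) (hy₂ : 0 < y₂) :
    gfun f (x₁ + x₂) (y₁ + y₂) ≤ gfun f x₁ y₁ + gfun f x₂ y₂ := by
  have hy : 0 < y₁ + y₂ := add_pos hy₁ hy₂
  rw [hf.gfun_of_pos (add_nonneg hx₁ hx₂) hy, hf.gfun_of_pos hx₁ hy₁, hf.gfun_of_pos hx₂ hy₂]
  have hconv := hf.convex (x₁ / y₁) (x₂ / y₂) (y₁ / (y₁ + y₂)) (y₂ / (y₁ + y₂))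
    (div_nonneg hy₁.le hy.le) (div_nonneg hy₂.le hy.le) (by field_simp)
  have harg : y₁ / (y₁ + y₂) * (x₁ / y₁) + y₂ / (y₁ + y₂) * (x₂ / y₂) = (x₁ + x₂) / (y₁ + y₂) := by
    field_simp
  rw [harg] at hconv
  calc ((y₁ + y₂ : ℝ) : EReal) * f ((x₁ + x₂) / (y₁ + y₂))
      ≤ (y₁ + y₂ : ℝ) * ((y₁ / (y₁ + y₂) : ℝ) * f (x₁ / y₁) + (y₂ / (y₁ + y₂) : ℝ) * f (x₂ / y₂)) :=
        mul_le_mul_of_nonneg_left hconv (EReal.coe_nonneg.2 hy.le)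
    _ = y₁ * f (x₁ / y₁) + y₂ * f (x₂ / y₂) := by
        rw [EReal.left_distrib_of_nonneg_of_ne_top (EReal.coe_nonneg.2 hy.le) (EReal.coe_ne_top _),
          ← mul_assoc, ← mul_assoc, ← EReal.coe_mul, ← EReal.coe_mul,
          mul_div_cancel₀ _ hy.ne', mul_div_cancel₀ _ hy.ne']

lemma gfun_add_le (hf : NiceF f) {x₁ y₁ x₂ y₂ : ℝ} (hx₁ : 0 ≤ x₁) (hy₁ : 0 ≤ y₁)
    (hx₂ : 0 ≤ x₂) (hy₂ : 0 ≤ y₂) :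
    gfun f (x₁ + x₂) (y₁ + y₂) ≤ gfun f x₁ y₁ + gfun f x₂ y₂ := by
  by_cases h₁ : (x₁, y₁) = 0
  · obtain ⟨rfl, rfl⟩ := Prod.mk_eq_zero.1 h₁
    simp [gfun_zero_zero]
  by_cases h₂ : (x₂, y₂) = 0
  · obtain ⟨rfl, rfl⟩ := Prod.mk_eq_zero.1 h₂
    simp [gfun_zero_zero]
  -- approach both points from `y > 0`; lower semicontinuity bounds the left side in the limit
  obtain ⟨p₁, hp₁, hp₁y, hg₁⟩ := hf.exists_tendsto_gfun_of_pos hx₁ hy₁ h₁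
  obtain ⟨p₂, hp₂, hp₂y, hg₂⟩ := hf.exists_tendsto_gfun_of_pos hx₂ hy₂ h₂
  have hsum : Tendsto (fun u => gfun f x₁ (p₁ u) + gfun f x₂ (p₂ u)) (𝓝[>] 0)
      (𝓝 (gfun f x₁ y₁ + gfun f x₂ y₂)) :=
    (EReal.continuousAt_add (.inr (hf.gfun_ne_bot hx₂ hy₂)) (.inl (hf.gfun_ne_bot hx₁ hy₁))
      ).tendsto.comp (hg₁.prodMk_nhds hg₂)
  have hpath : Tendsto (fun u => (x₁ + x₂, p₁ u + p₂ u)) (𝓝[>] 0)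
      (𝓝[Ici 0] (x₁ + x₂, y₁ + y₂)) := by
    refine tendsto_nhdsWithin_iff.2 ⟨tendsto_const_nhds.prodMk_nhds (hp₁y.add hp₂y), ?_⟩
    filter_upwards [self_mem_nhdsWithin] with u (hu : 0 < u)
    exact ⟨add_nonneg hx₁ hx₂, (add_pos (hp₁ u hu) (hp₂ u hu)).le⟩
  have hne : (x₁ + x₂, y₁ + y₂) ≠ 0 := fun h => h₁ <| by
    obtain ⟨hx, hy⟩ := Prod.mk_eq_zero.1 h
    exact Prod.mk_eq_zero.2 ⟨by linarith, by linarith⟩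
  have hlsc := hf.lowerSemicontinuousWithinAt_gfun_of_ne_zero
    ⟨add_nonneg hx₁ hx₂, add_nonneg hy₁ hy₂⟩ hne
  by_contra! hlt
  obtain ⟨c, hc₁, hc₂⟩ := exists_between hlt
  obtain ⟨u, hu, hcu, hsumu⟩ := (eventually_mem_nhdsWithin.and ((hpath.eventually (hlsc c hc₂)).and
    (hsum.eventually (gt_mem_nhds hc₁)))).exists
  exact (hcu.trans_le (hf.gfun_add_le_of_pos hx₁ (hp₁ u hu) hx₂ (hp₂ u hu))).not_gt hsumu

lemma lowerSemicontinuousWithinAt_gfun_zero (hf : NiceF f) :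
    LowerSemicontinuousWithinAt (uncurry (gfun f)) (Ici 0) 0 := by
  -- `f 1 = gfun f 1 1 ≤ gfun f q + gfun f (1 - q)`, and the last term tends to `f 1`
  set F : ℝ → ℝ := fun x => (f x).toReal
  have hF : ContinuousAt F 1 :=
    (hf.convexOn_toReal.continuousOn isOpen_Ioi).continuousAt (Ioi_mem_nhds one_pos)
  have hrest : Tendsto (fun q : ℝ × ℝ => F 1 - (1 - q.2) * F ((1 - q.1) / (1 - q.2))) (𝓝 0)
      (𝓝 0) := by
    have hcont : ContinuousAt (fun q : ℝ × ℝ => F 1 - (1 - q.2) * F ((1 - q.1) / (1 - q.2))) 0 :=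
      continuousAt_const.sub ((continuousAt_const.sub continuousAt_snd).mul
        (hF.comp_of_eq ((continuousAt_const.sub continuousAt_fst).div
          (continuousAt_const.sub continuousAt_snd) (by simp)) (by simp)))
    simpa using hcont.tendsto
  intro c (hc : c < gfun f 0 0)
  rw [gfun_zero_zero] at hc
  have hnear : ∀ᶠ q : ℝ × ℝ in 𝓝 0, q.1 < 1 ∧ q.2 < 1 :=
    (continuousAt_fst.eventually (gt_mem_nhds one_pos)).and
      (continuousAt_snd.eventually (gt_mem_nhds one_pos))
  filter_upwards [eventually_mem_nhdsWithin,
    ((EReal.tendsto_coe.2 hrest).eventually (lt_mem_nhds hc)).filter_mono nhdsWithin_le_nhds,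
    hnear.filter_mono nhdsWithin_le_nhds] with q (hq : 0 ≤ q) hcq ⟨hq₁, hq₂⟩
  have hsplit := hf.gfun_add_le hq.1 hq.2 (sub_nonneg.2 hq₁.le) (sub_nonneg.2 hq₂.le)
  rw [add_sub_cancel, add_sub_cancel, hf.gfun_of_pos zero_le_one one_pos, div_one,
    hf.gfun_of_pos (sub_nonneg.2 hq₁.le) (sub_pos.2 hq₂), ← hf.coe_toReal one_pos,
    ← hf.coe_toReal (div_pos (sub_pos.2 hq₁) (sub_pos.2 hq₂)), ← EReal.coe_mul, ← EReal.coe_mul,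
    one_mul] at hsplit
  exact hcq.trans_le (EReal.coe_sub _ _ ▸ EReal.sub_le_of_le_add hsplit)

lemma lowerSemicontinuousOn_gfun (hf : NiceF f) :
    LowerSemicontinuousOn (uncurry (gfun f)) (Ici 0) := fun q hq => by
  rcases eq_or_ne q 0 with rfl | hq₀
  exacts [hf.lowerSemicontinuousWithinAt_gfun_zero,
    hf.lowerSemicontinuousWithinAt_gfun_of_ne_zero hq hq₀]

end NiceF

lemma Matrix.PosSemidef.re_trace_mul_nonneg {ι : Type*} [Fintype ι] [DecidableEq ι]
    {ρ M : Matrix ι ι ℂ} (hρ : ρ.PosSemidef) (hM : M.PosSemidef) : 0 ≤ (ρ * M).trace.re := by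
  obtain ⟨B, rfl⟩ : ∃ B : Matrix ι ι ℂ, ρ = Bᴴ * B := by
    open scoped MatrixOrder in
    exact CStarAlgebra.nonneg_iff_eq_star_mul_self.mp hρ.nonneg
  rw [Matrix.mul_assoc, Matrix.trace_mul_comm]
  exact (Complex.nonneg_iff.1 (hM.mul_mul_conjTranspose_same B).trace_nonneg).1

section Measured

variable {f : ℝ → EReal} {n m : ℕ}

/-- The classical `f`-divergence of the outcome distributions of `M` on `ρ₁` and `ρ₂`. -/
def measuredDiv (f : ℝ → EReal) (ρ₁ ρ₂ : Matrix (Fin n) (Fin n) ℂ)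
    (M : Fin m → Matrix (Fin n) (Fin n) ℂ) : EReal :=
  ∑ x, gfun f (ρ₁ * M x).trace.re (ρ₂ * M x).trace.re

lemma measuredDiv_le_Dfmin (ρ₁ ρ₂ : Matrix (Fin n) (Fin n) ℂ)
    {M : Fin m → Matrix (Fin n) (Fin n) ℂ} (hM : IsPOVM M) :
    measuredDiv f ρ₁ ρ₂ M ≤ Dfmin f ρ₁ ρ₂ :=
  le_iSup_of_le m <| le_iSup_of_le M <| le_iSup_of_le hM le_rfl

lemma Dfmin_le {ρ₁ ρ₂ : Matrix (Fin n) (Fin n) ℂ} {D : EReal}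
    (h : ∀ (m : ℕ) (M : Fin m → Matrix (Fin n) (Fin n) ℂ), IsPOVM M → measuredDiv f ρ₁ ρ₂ M ≤ D) :
    Dfmin f ρ₁ ρ₂ ≤ D :=
  iSup_le fun m => iSup_le fun M => iSup_le fun hM => h m M hM

lemma isPOVM_one : IsPOVM fun _ : Fin 1 => (1 : Matrix (Fin n) (Fin n) ℂ) :=
  ⟨fun _ => Matrix.PosSemidef.one, by simp⟩

namespace NiceF

lemma measuredDiv_ne_bot (hf : NiceF f) {ρ₁ ρ₂ : Matrix (Fin n) (Fin n) ℂ} (hρ₁ : ρ₁.PosSemidef)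
    (hρ₂ : ρ₂.PosSemidef) {M : Fin m → Matrix (Fin n) (Fin n) ℂ} (hM : IsPOVM M) :
    measuredDiv f ρ₁ ρ₂ M ≠ ⊥ :=
  EReal.sum_ne_bot fun x _ =>
    hf.gfun_ne_bot (hρ₁.re_trace_mul_nonneg (hM.1 x)) (hρ₂.re_trace_mul_nonneg (hM.1 x))

lemma Dfmin_ne_bot (hf : NiceF f) {ρ₁ ρ₂ : Matrix (Fin n) (Fin n) ℂ} (hρ₁ : ρ₁.PosSemidef)
    (hρ₂ : ρ₂.PosSemidef) : Dfmin f ρ₁ ρ₂ ≠ ⊥ :=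
  ne_bot_of_le_ne_bot (hf.measuredDiv_ne_bot hρ₁ hρ₂ isPOVM_one)
    (measuredDiv_le_Dfmin ρ₁ ρ₂ isPOVM_one)

lemma Dfmin_add_le (hf : NiceF f) {ρ₁ ρ₂ σ₁ σ₂ : Matrix (Fin n) (Fin n) ℂ}
    (hρ₁ : ρ₁.PosSemidef) (hρ₂ : ρ₂.PosSemidef) (hσ₁ : σ₁.PosSemidef) (hσ₂ : σ₂.PosSemidef) :
    Dfmin f (ρ₁ + σ₁) (ρ₂ + σ₂) ≤ Dfmin f ρ₁ ρ₂ + Dfmin f σ₁ σ₂ := by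
  refine Dfmin_le fun m M hM => ?_
  calc measuredDiv f (ρ₁ + σ₁) (ρ₂ + σ₂) M ≤ measuredDiv f ρ₁ ρ₂ M + measuredDiv f σ₁ σ₂ M := by
        rw [measuredDiv, measuredDiv, measuredDiv, ← Finset.sum_add_distrib]
        gcongr with x
        simp only [Matrix.add_mul, Matrix.trace_add, Complex.add_re]
        exact hf.gfun_add_le (hρ₁.re_trace_mul_nonneg (hM.1 x)) (hρ₂.re_trace_mul_nonneg (hM.1 x))
          (hσ₁.re_trace_mul_nonneg (hM.1 x)) (hσ₂.re_trace_mul_nonneg (hM.1 x))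
    _ ≤ Dfmin f ρ₁ ρ₂ + Dfmin f σ₁ σ₂ :=
        add_le_add (measuredDiv_le_Dfmin _ _ hM) (measuredDiv_le_Dfmin _ _ hM)

lemma Dfmin_smul_le (hf : NiceF f) {a : ℝ} (ha : 0 ≤ a) {ρ₁ ρ₂ : Matrix (Fin n) (Fin n) ℂ}
    (hρ₁ : ρ₁.PosSemidef) (hρ₂ : ρ₂.PosSemidef) :
    Dfmin f ((a : ℂ) • ρ₁) ((a : ℂ) • ρ₂) ≤ a * Dfmin f ρ₁ ρ₂ := by
  refine Dfmin_le fun m M hM => ?_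
  have hscale : measuredDiv f ((a : ℂ) • ρ₁) ((a : ℂ) • ρ₂) M = a * measuredDiv f ρ₁ ρ₂ M := by
    rw [measuredDiv, measuredDiv, EReal.coe_mul_sum _ _ ha]
    refine Finset.sum_congr rfl fun x _ => ?_
    simp only [Matrix.smul_mul, Matrix.trace_smul, smul_eq_mul, Complex.re_ofReal_mul]
    exact hf.gfun_mul ha (hρ₁.re_trace_mul_nonneg (hM.1 x)) (hρ₂.re_trace_mul_nonneg (hM.1 x))
  rw [hscale]
  exact mul_le_mul_of_nonneg_left (measuredDiv_le_Dfmin _ _ hM) (EReal.coe_nonneg.2 ha)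

lemma Dfmin_smul (hf : NiceF f) {a : ℝ} (ha : 0 ≤ a) {ρ₁ ρ₂ : Matrix (Fin n) (Fin n) ℂ}
    (hρ₁ : ρ₁.PosSemidef) (hρ₂ : ρ₂.PosSemidef) :
    Dfmin f ((a : ℂ) • ρ₁) ((a : ℂ) • ρ₂) = a * Dfmin f ρ₁ ρ₂ := by
  refine (hf.Dfmin_smul_le ha hρ₁ hρ₂).antisymm ?_
  rcases ha.eq_or_lt with rfl | ha
  · simpa [measuredDiv, gfun_zero_zero] using
      measuredDiv_le_Dfmin (f := f) (0 : Matrix (Fin n) (Fin n) ℂ) 0 isPOVM_one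
  have hnonneg : (0 : ℂ) ≤ a := Complex.zero_le_real.2 ha.le
  have hinv := hf.Dfmin_smul_le (inv_nonneg.2 ha.le) (hρ₁.smul hnonneg) (hρ₂.smul hnonneg)
  rw [smul_smul, smul_smul, ← Complex.ofReal_mul, inv_mul_cancel₀ ha.ne', Complex.ofReal_one,
    one_smul, one_smul] at hinv
  calc (a : EReal) * Dfmin f ρ₁ ρ₂ ≤ a * ((a⁻¹ : ℝ) * Dfmin f ((a : ℂ) • ρ₁) ((a : ℂ) • ρ₂)) :=
        mul_le_mul_of_nonneg_left hinv (EReal.coe_nonneg.2 ha.le)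
    _ = Dfmin f ((a : ℂ) • ρ₁) ((a : ℂ) • ρ₂) := by
        rw [← mul_assoc, ← EReal.coe_mul, mul_inv_cancel₀ ha.ne', EReal.coe_one, one_mul]

lemma lowerSemicontinuousOn_measuredDiv (hf : NiceF f) {M : Fin m → Matrix (Fin n) (Fin n) ℂ}
    (hM : IsPOVM M) :
    LowerSemicontinuousOn (fun p : Matrix (Fin n) (Fin n) ℂ × Matrix (Fin n) (Fin n) ℂ =>
      measuredDiv f p.1 p.2 M) {p | p.1.PosSemidef ∧ p.2.PosSemidef} := fun p hp => by
  refine EReal.lowerSemicontinuousWithinAt_sum (fun x _ => ?_) fun x _ =>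
    hf.gfun_ne_bot (hp.1.re_trace_mul_nonneg (hM.1 x)) (hp.2.re_trace_mul_nonneg (hM.1 x))
  have hcont : Continuous fun q : Matrix (Fin n) (Fin n) ℂ × Matrix (Fin n) (Fin n) ℂ =>
      ((q.1 * M x).trace.re, (q.2 * M x).trace.re) := by
    fun_prop
  exact (hf.lowerSemicontinuousOn_gfun _ ⟨hp.1.re_trace_mul_nonneg (hM.1 x),
    hp.2.re_trace_mul_nonneg (hM.1 x)⟩).comp hcont.continuousWithinAt
    fun q hq => ⟨hq.1.re_trace_mul_nonneg (hM.1 x), hq.2.re_trace_mul_nonneg (hM.1 x)⟩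

lemma lowerSemicontinuousOn_Dfmin (hf : NiceF f) :
    LowerSemicontinuousOn (fun p : Matrix (Fin n) (Fin n) ℂ × Matrix (Fin n) (Fin n) ℂ =>
      Dfmin f p.1 p.2) {p | p.1.PosSemidef ∧ p.2.PosSemidef} :=
  lowerSemicontinuousOn_iSup fun _ => lowerSemicontinuousOn_iSup fun _ =>
    lowerSemicontinuousOn_iSup fun hM => hf.lowerSemicontinuousOn_measuredDiv hM

end NiceF

end Measured

/-- on pairs of positive semidefinite matrices, `D_f^min` is jointly
convex, positively homogeneous, nowhere `−∞`, and lower semicontinuous. -/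
theorem stmt_5 (f : ℝ → EReal) (hf : NiceF f) {n : ℕ} :
    (∀ ρ1 ρ2 σ1 σ2 : Matrix (Fin n) (Fin n) ℂ,
      ρ1.PosSemidef → ρ2.PosSemidef → σ1.PosSemidef → σ2.PosSemidef →
      ∀ t : ℝ, 0 ≤ t → t ≤ 1 →
        Dfmin f ((t : ℂ) • ρ1 + ((1 - t : ℝ) : ℂ) • σ1)
                ((t : ℂ) • ρ2 + ((1 - t : ℝ) : ℂ) • σ2)
          ≤ ((t : ℝ) : EReal) * Dfmin f ρ1 ρ2 + ((1 - t : ℝ) : EReal) * Dfmin f σ1 σ2) ∧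
    (∀ ρ1 ρ2 : Matrix (Fin n) (Fin n) ℂ, ρ1.PosSemidef → ρ2.PosSemidef →
      ∀ a : ℝ, 0 ≤ a →
        Dfmin f ((a : ℂ) • ρ1) ((a : ℂ) • ρ2) = ((a : ℝ) : EReal) * Dfmin f ρ1 ρ2) ∧
    (∀ ρ1 ρ2 : Matrix (Fin n) (Fin n) ℂ, ρ1.PosSemidef → ρ2.PosSemidef →
        Dfmin f ρ1 ρ2 ≠ ⊥) ∧
    LowerSemicontinuousOn
      (fun p : Matrix (Fin n) (Fin n) ℂ × Matrix (Fin n) (Fin n) ℂ => Dfmin f p.1 p.2)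
      {p | p.1.PosSemidef ∧ p.2.PosSemidef} := by
  refine ⟨fun ρ1 ρ2 σ1 σ2 hρ1 hρ2 hσ1 hσ2 t ht₀ ht₁ => ?_,
    fun ρ1 ρ2 hρ1 hρ2 a ha => hf.Dfmin_smul ha hρ1 hρ2,
    fun ρ1 ρ2 hρ1 hρ2 => hf.Dfmin_ne_bot hρ1 hρ2, hf.lowerSemicontinuousOn_Dfmin⟩
  have hs : (0 : ℂ) ≤ t := Complex.zero_le_real.2 ht₀
  have hs' : (0 : ℂ) ≤ ((1 - t : ℝ) : ℂ) := Complex.zero_le_real.2 (sub_nonneg.2 ht₁)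
  calc _ ≤ Dfmin f ((t : ℂ) • ρ1) ((t : ℂ) • ρ2) +
        Dfmin f (((1 - t : ℝ) : ℂ) • σ1) (((1 - t : ℝ) : ℂ) • σ2) :=
        hf.Dfmin_add_le (hρ1.smul hs) (hρ2.smul hs) (hσ1.smul hs') (hσ2.smul hs')
    _ = _ := by
        rw [hf.Dfmin_smul ht₀ hρ1 hρ2, hf.Dfmin_smul (sub_nonneg.2 ht₁) hσ1 hσ2]
end
end

section
/- Let 0 < α ≤ 1/2 and let f_α : ℝ → ℝ ∪ {+∞} be defined by f_α(λ) := −λ^α for λ ≥ 0 and f_α(λ) := +∞ for λ < 0. Let φ1 be a unit vector and ρ2 a density matrix on the same finite-dimensional space with ⟨φ1|ρ2|φ1⟩ ≠ 0. Then D_{f_α}^min(|φ1⟩⟨φ1| ‖ ρ2) = −(⟨φ1|ρ2|φ1⟩)^{1−α}. -/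
open Filter Matrix
open scoped ComplexOrder
open scoped BigOperators

noncomputable section

attribute [local instance] Classical.propDecidable

/-- `f_α(λ) = −λ^α` for `λ ≥ 0`, `+∞` for `λ < 0` (here `0 < α < 1`). -/
def falpha (α : ℝ) : ℝ → EReal := fun l => if 0 ≤ l then ((-(l ^ α) : ℝ) : EReal) else ⊤

/-! For a POVM `(M_x)` put `p_x = ⟨φ|M_x|φ⟩`, `q_x = tr(ρ M_x)` and `c = ⟨φ|ρ|φ⟩`, so that
`Σ_x p_x = 1` and `g(p_x, q_x) = -p_x^α q_x^(1-α)`. Expanding `c = Σ_x ⟨ρφ|M_x|φ⟩` and bounding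
each term by Cauchy–Schwarz, `|⟨ρφ|M_x|φ⟩|² ≤ ⟨ρφ|M_x|ρφ⟩ p_x ≤ c q_x p_x`, gives the fidelity
bound `√c ≤ Σ_x √(p_x q_x)`. Weighted Hölder with exponent `2(1-α) ≥ 1` and weights `p_x` turns
this into `c^(1-α) ≤ Σ_x p_x^α q_x^(1-α)`, so no measurement exceeds `-c^(1-α)`; the
measurement `{|φ⟩⟨φ|, 1 - |φ⟩⟨φ|}` attains it. -/

namespace Real

open Finset

lemma mul_sqrt_div_eq_sqrt_mul {a b : ℝ} (ha : 0 ≤ a) : a * √(b / a) = √(a * b) := by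
  rcases ha.eq_or_lt with rfl | ha
  · simp
  · rw [← sqrt_sq ha.le, ← sqrt_mul (sq_nonneg a), sqrt_sq ha.le]
    congr 1
    field_simp

lemma mul_sqrt_div_rpow_eq_rpow_mul_rpow {α a b : ℝ} (hα0 : 0 < α) (ha : 0 ≤ a) (hb : 0 ≤ b) :
    a * √(b / a) ^ (2 * (1 - α)) = a ^ α * b ^ (1 - α) := by
  rcases ha.eq_or_lt with rfl | ha
  · simp [zero_rpow hα0.ne']
  · have hexp : 1 / 2 * (2 * (1 - α)) = 1 - α := by ring
    rw [sqrt_eq_rpow, ← rpow_mul (div_nonneg hb ha.le), hexp, div_rpow hb ha.le, rpow_sub ha,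
      rpow_one]
    field_simp

lemma rpow_sum_sqrt_mul_le_sum_rpow_mul_rpow {X : Type*} [Fintype X] {α : ℝ} (hα0 : 0 < α)
    (hα : α ≤ 1 / 2) {p q : X → ℝ} (hp : ∀ x, 0 ≤ p x) (hq : ∀ x, 0 ≤ q x)
    (hp1 : ∑ x, p x = 1) :
    (∑ x, √(p x * q x)) ^ (2 * (1 - α)) ≤ ∑ x, p x ^ α * q x ^ (1 - α) := by
  have hr : 1 ≤ 2 * (1 - α) := by linarith
  have hQ : 0 ≤ ∑ x, p x ^ α * q x ^ (1 - α) :=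
    sum_nonneg fun x _ => mul_nonneg (rpow_nonneg (hp x) _) (rpow_nonneg (hq x) _)
  have holder := inner_le_weight_mul_Lp_of_nonneg univ hr p (fun x => √(q x / p x)) hp
    fun _ => sqrt_nonneg _
  simp only [hp1, one_rpow, one_mul, mul_sqrt_div_eq_sqrt_mul (hp _),
    mul_sqrt_div_rpow_eq_rpow_mul_rpow hα0 (hp _) (hq _)] at holder
  calc (∑ x, √(p x * q x)) ^ (2 * (1 - α))
      ≤ ((∑ x, p x ^ α * q x ^ (1 - α)) ^ (2 * (1 - α))⁻¹) ^ (2 * (1 - α)) := by gcongr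
    _ = ∑ x, p x ^ α * q x ^ (1 - α) := by
      rw [← rpow_mul hQ, inv_mul_cancel₀ (by linarith), rpow_one]

end Real

namespace Matrix

variable {ι κ : Type*} [Fintype ι]

lemma re_dotProduct_star_self (x : ι → ℂ) : (star x ⬝ᵥ x).re = ∑ i, ‖x i‖ ^ 2 := by
  simp [dotProduct, Complex.re_sum, ← Complex.normSq_eq_norm_sq, Complex.normSq_apply, mul_comm]

lemma norm_dotProduct_sq_le (x y : ι → ℂ) :
    ‖star x ⬝ᵥ y‖ ^ 2 ≤ (star x ⬝ᵥ x).re * (star y ⬝ᵥ y).re := by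
  have h := norm_inner_le_norm (𝕜 := ℂ) (WithLp.toLp 2 x) (WithLp.toLp 2 y)
  rw [EuclideanSpace.inner_toLp_toLp, dotProduct_comm] at h
  calc ‖star x ⬝ᵥ y‖ ^ 2 ≤ (‖WithLp.toLp 2 x‖ * ‖WithLp.toLp 2 y‖) ^ 2 := by gcongr
    _ = _ := by
      rw [mul_pow, norm_sq_eq_re_inner (𝕜 := ℂ), norm_sq_eq_re_inner (𝕜 := ℂ),
        EuclideanSpace.inner_toLp_toLp, EuclideanSpace.inner_toLp_toLp, dotProduct_comm,
        dotProduct_comm y]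
      rfl

lemma dotProduct_conjTranspose_mul_mulVec [Fintype κ] (B : Matrix κ ι ℂ) (x y : ι → ℂ) :
    star x ⬝ᵥ (Bᴴ * B) *ᵥ y = star (B *ᵥ x) ⬝ᵥ B *ᵥ y := by
  rw [star_mulVec, ← mulVec_mulVec, dotProduct_mulVec, dotProduct_mulVec, vecMul_vecMul]

lemma re_dotProduct_mulVec_le_trace_mul [Fintype κ] (B : Matrix κ ι ℂ) (x : ι → ℂ) :
    (star (B *ᵥ x) ⬝ᵥ B *ᵥ x).re ≤ (Bᴴ * B).trace.re * (star x ⬝ᵥ x).re := by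
  have hrow : ∀ k, (B *ᵥ x) k = star (star (B k)) ⬝ᵥ x := fun k => by simp [mulVec]
  have htrace : (Bᴴ * B).trace.re = ∑ k, (star (star (B k)) ⬝ᵥ star (B k)).re := by
    rw [trace_mul_comm, trace, Complex.re_sum]
    simp [mul_apply, dotProduct]
  rw [re_dotProduct_star_self, htrace, Finset.sum_mul]
  gcongr with k
  rw [hrow]
  exact norm_dotProduct_sq_le _ _

lemma trace_vecMulVec_mul (a b : ι → ℂ) (A : Matrix ι ι ℂ) :
    (vecMulVec a b * A).trace = b ⬝ᵥ A *ᵥ a := by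
  rw [vecMulVec_mul, trace_vecMulVec, dotProduct_comm, dotProduct_mulVec]

lemma isStarProjection_vecMulVec_self_star {φ : ι → ℂ} (hφ : star φ ⬝ᵥ φ = 1) :
    IsStarProjection (vecMulVec φ (star φ)) :=
  ⟨by rw [IsIdempotentElem, vecMulVec_mul_vecMulVec, hφ, one_smul],
    (posSemidef_vecMulVec_self_star φ).isHermitian⟩

open scoped MatrixOrder

lemma PosSemidef.re_dotProduct_mulVec_nonneg {A : Matrix ι ι ℂ} (hA : A.PosSemidef)
    (x : ι → ℂ) : 0 ≤ (star x ⬝ᵥ A *ᵥ x).re :=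
  (Complex.nonneg_iff.mp (hA.dotProduct_mulVec_nonneg x)).1

lemma isPOVM_vecMulVec_self_star {n : ℕ} {φ : Fin n → ℂ} (hφ : star φ ⬝ᵥ φ = 1) :
    IsPOVM ![vecMulVec φ (star φ), 1 - vecMulVec φ (star φ)] :=
  ⟨Fin.forall_fin_two.2 ⟨posSemidef_vecMulVec_self_star φ,
    nonneg_iff_posSemidef.1 (isStarProjection_vecMulVec_self_star hφ).one_sub.nonneg⟩, by simp⟩

variable [DecidableEq ι]

lemma PosSemidef.re_trace_mul_nonneg_s15 {A B : Matrix ι ι ℂ} (hA : A.PosSemidef)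
    (hB : B.PosSemidef) : 0 ≤ (A * B).trace.re := by
  obtain ⟨S, rfl⟩ := CStarAlgebra.nonneg_iff_eq_star_mul_self.mp hA.nonneg
  rw [Matrix.mul_assoc, trace_mul_comm, star_eq_conjTranspose]
  exact (Complex.nonneg_iff.mp (hB.mul_mul_conjTranspose_same S).trace_nonneg).1

theorem PosSemidef.norm_dotProduct_mulVec_mul_sq_le {ρ M : Matrix ι ι ℂ} (hρ : ρ.PosSemidef)
    (hM : M.PosSemidef) (φ : ι → ℂ) :
    ‖star (ρ *ᵥ φ) ⬝ᵥ M *ᵥ φ‖ ^ 2 ≤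
      (star φ ⬝ᵥ ρ *ᵥ φ).re * (star φ ⬝ᵥ M *ᵥ φ).re * (ρ * M).trace.re := by
  obtain ⟨S, rfl⟩ := CStarAlgebra.nonneg_iff_eq_star_mul_self.mp hρ.nonneg
  obtain ⟨B, rfl⟩ := CStarAlgebra.nonneg_iff_eq_star_mul_self.mp hM.nonneg
  simp only [star_eq_conjTranspose] at *
  -- Cauchy–Schwarz for `B Sᴴ (Sφ)` and `Bφ`, then `‖B Sᴴ v‖² ≤ tr((B Sᴴ)ᴴ (B Sᴴ)) ‖v‖²`
  have hlhs : star ((Sᴴ * S) *ᵥ φ) ⬝ᵥ (Bᴴ * B) *ᵥ φ = star ((B * Sᴴ) *ᵥ (S *ᵥ φ)) ⬝ᵥ B *ᵥ φ := by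
    rw [dotProduct_conjTranspose_mul_mulVec, mulVec_mulVec, mulVec_mulVec, Matrix.mul_assoc]
  have htrace : (Sᴴ * S * (Bᴴ * B)).trace = ((B * Sᴴ)ᴴ * (B * Sᴴ)).trace := by
    rw [conjTranspose_mul, conjTranspose_conjTranspose, Matrix.mul_assoc, trace_mul_comm]
    simp only [Matrix.mul_assoc]
  rw [hlhs, dotProduct_conjTranspose_mul_mulVec, dotProduct_conjTranspose_mul_mulVec, htrace]
  calc _ ≤ (star ((B * Sᴴ) *ᵥ (S *ᵥ φ)) ⬝ᵥ (B * Sᴴ) *ᵥ (S *ᵥ φ)).re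
        * (star (B *ᵥ φ) ⬝ᵥ B *ᵥ φ).re := norm_dotProduct_sq_le _ _
    _ ≤ ((B * Sᴴ)ᴴ * (B * Sᴴ)).trace.re * (star (S *ᵥ φ) ⬝ᵥ S *ᵥ φ).re
        * (star (B *ᵥ φ) ⬝ᵥ B *ᵥ φ).re := by
      gcongr
      · rw [re_dotProduct_star_self]; positivity
      · exact re_dotProduct_mulVec_le_trace_mul _ _
    _ = _ := by ring

theorem PosSemidef.sqrt_re_dotProduct_mulVec_le_sum_sqrt {X : Type*} [Fintype X]
    {ρ : Matrix ι ι ℂ} (hρ : ρ.PosSemidef) {M : X → Matrix ι ι ℂ} (hM : ∀ x, (M x).PosSemidef)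
    (hsum : ∑ x, M x = 1) (φ : ι → ℂ) :
    √(star φ ⬝ᵥ ρ *ᵥ φ).re ≤ ∑ x, √((star φ ⬝ᵥ M x *ᵥ φ).re * (ρ * M x).trace.re) := by
  set c := (star φ ⬝ᵥ ρ *ᵥ φ).re
  set S := ∑ x, √((star φ ⬝ᵥ M x *ᵥ φ).re * (ρ * M x).trace.re)
  have hc : 0 ≤ c := hρ.re_dotProduct_mulVec_nonneg φ
  have hS : 0 ≤ S := Finset.sum_nonneg fun _ _ => Real.sqrt_nonneg _
  have hdecomp : c = (∑ x, star (ρ *ᵥ φ) ⬝ᵥ M x *ᵥ φ).re := by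
    rw [← dotProduct_sum, ← sum_mulVec, hsum, one_mulVec, star_dotProduct,
      Complex.star_def, Complex.conj_re]
  have hterm : ∀ x, (star (ρ *ᵥ φ) ⬝ᵥ M x *ᵥ φ).re ≤
      √c * √((star φ ⬝ᵥ M x *ᵥ φ).re * (ρ * M x).trace.re) := fun x => by
    rw [← Real.sqrt_mul hc, ← mul_assoc]
    exact (Complex.re_le_norm _).trans
      (Real.le_sqrt_of_sq_le (hρ.norm_dotProduct_mulVec_mul_sq_le (hM x) φ))
  have hcS : √c * √c ≤ √c * S := calc
    √c * √c = (∑ x, star (ρ *ᵥ φ) ⬝ᵥ M x *ᵥ φ).re := by rw [Real.mul_self_sqrt hc, hdecomp]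
    _ ≤ √c * S := by
      rw [Complex.re_sum, Finset.mul_sum]
      exact Finset.sum_le_sum fun x _ => hterm x
  rcases (Real.sqrt_nonneg c).eq_or_lt with h0 | hpos
  · exact h0 ▸ hS
  · exact le_of_mul_le_mul_left hcS hpos

theorem PosSemidef.rpow_re_dotProduct_mulVec_le_sum {X : Type*} [Fintype X] {α : ℝ}
    (hα0 : 0 < α) (hα : α ≤ 1 / 2) {ρ : Matrix ι ι ℂ} (hρ : ρ.PosSemidef)
    {M : X → Matrix ι ι ℂ} (hM : ∀ x, (M x).PosSemidef) (hsum : ∑ x, M x = 1) {φ : ι → ℂ}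
    (hφ : star φ ⬝ᵥ φ = 1) :
    (star φ ⬝ᵥ ρ *ᵥ φ).re ^ (1 - α) ≤
      ∑ x, (star φ ⬝ᵥ M x *ᵥ φ).re ^ α * (ρ * M x).trace.re ^ (1 - α) := by
  have hc : 0 ≤ (star φ ⬝ᵥ ρ *ᵥ φ).re := hρ.re_dotProduct_mulVec_nonneg φ
  have hp1 : ∑ x, (star φ ⬝ᵥ M x *ᵥ φ).re = 1 := by
    rw [← Complex.re_sum, ← dotProduct_sum, ← sum_mulVec, hsum, one_mulVec, hφ, Complex.one_re]
  calc (star φ ⬝ᵥ ρ *ᵥ φ).re ^ (1 - α) = √(star φ ⬝ᵥ ρ *ᵥ φ).re ^ (2 * (1 - α)) := by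
        rw [Real.sqrt_eq_rpow, ← Real.rpow_mul hc]
        ring_nf
    _ ≤ (∑ x, √((star φ ⬝ᵥ M x *ᵥ φ).re * (ρ * M x).trace.re)) ^ (2 * (1 - α)) :=
        Real.rpow_le_rpow (Real.sqrt_nonneg _)
          (hρ.sqrt_re_dotProduct_mulVec_le_sum_sqrt hM hsum φ) (by linarith)
    _ ≤ _ := Real.rpow_sum_sqrt_mul_le_sum_rpow_mul_rpow hα0 hα
        (fun x => (hM x).re_dotProduct_mulVec_nonneg φ) (fun x => hρ.re_trace_mul_nonneg_s15 (hM x))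
        hp1

end Matrix

theorem EReal.coe_finset_sum {X : Type*} (s : Finset X) (f : X → ℝ) :
    ((∑ x ∈ s, f x : ℝ) : EReal) = ∑ x ∈ s, (f x : EReal) :=
  map_sum (⟨⟨Real.toEReal, EReal.coe_zero⟩, EReal.coe_add⟩ : ℝ →+ EReal) f s

lemma falpha_of_nonneg {α l : ℝ} (hl : 0 ≤ l) : falpha α l = ((-(l ^ α) : ℝ) : EReal) :=
  if_pos hl

lemma mem_edom_falpha {α l : ℝ} (hl : 0 ≤ l) : l ∈ edom (falpha α) :=
  show falpha α l < ⊤ from falpha_of_nonneg hl ▸ EReal.coe_lt_top _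

lemma coe_mul_falpha_div {α p u : ℝ} (hp : 0 ≤ p) (hu : 0 < u) :
    (u : EReal) * falpha α (p / u) = ((-(p ^ α * u ^ (1 - α)) : ℝ) : EReal) := by
  rw [falpha_of_nonneg (div_nonneg hp hu.le), ← EReal.coe_mul, Real.div_rpow hp hu.le,
    Real.rpow_sub hu, Real.rpow_one]
  congr 1
  field_simp

lemma gfun_falpha {α p q : ℝ} (hα0 : 0 < α) (hα1 : α < 1) (hp : 0 ≤ p) (hq : 0 ≤ q) :
    gfun (falpha α) p q = ((-(p ^ α * q ^ (1 - α)) : ℝ) : EReal) := by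
  rcases hq.eq_or_lt with rfl | hq
  · rcases hp.eq_or_lt with rfl | hp
    · simp [gfun, Real.zero_rpow hα0.ne']
    have hcont : ContinuousAt (fun u : ℝ => ((-(p ^ α * u ^ (1 - α)) : ℝ) : EReal)) 0 :=
      continuous_coe_real_ereal.continuousAt.comp
        ((Real.continuousAt_rpow_const 0 (1 - α) (Or.inr (by linarith))).const_mul _).neg
    have hlim : Tendsto (fun u : ℝ => (u : EReal) * falpha α (p / u)) (nhdsWithin 0 (Set.Ioi 0))
        (nhds ((-(p ^ α * (0 : ℝ) ^ (1 - α)) : ℝ) : EReal)) :=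
      (hcont.tendsto.mono_left nhdsWithin_le_nhds).congr' <|
        eventually_nhdsWithin_of_forall fun u hu => (coe_mul_falpha_div hp.le hu).symm
    rw [gfun, if_neg (fun h => hp.ne' h.1), if_neg (fun h => lt_irrefl 0 h.2),
      if_pos ⟨mem_edom_falpha hp.le, rfl⟩, hlim.limUnder_eq]
  · rw [gfun, if_neg (fun h => hq.ne' h.2), if_pos ⟨mem_edom_falpha hp, hq⟩,
      coe_mul_falpha_div hp hq]

lemma sum_gfun_falpha {X : Type*} [Fintype X] {α : ℝ} (hα0 : 0 < α) (hα1 : α < 1)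
    {p q : X → ℝ} (hp : ∀ x, 0 ≤ p x) (hq : ∀ x, 0 ≤ q x) :
    ∑ x, gfun (falpha α) (p x) (q x) = ((-∑ x, p x ^ α * q x ^ (1 - α) : ℝ) : EReal) := by
  simp only [gfun_falpha hα0 hα1 (hp _) (hq _), ← Finset.sum_neg_distrib, EReal.coe_finset_sum]

theorem stmt_15_general (α : ℝ) (hα0 : 0 < α) (hα : α ≤ 1/2)
    {n : ℕ} (φ : Fin n → ℂ) (hφ : star φ ⬝ᵥ φ = 1)
    (ρ2 : Matrix (Fin n) (Fin n) ℂ) (h2 : ρ2.PosSemidef) :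
    Dfmin (falpha α) (Matrix.vecMulVec φ (star φ)) ρ2 =
      ((-(((star φ ⬝ᵥ ρ2.mulVec φ).re) ^ (1 - α)) : ℝ) : EReal) := by
  have hα1 : α < 1 := by linarith
  set P := vecMulVec φ (star φ)
  have hP : IsStarProjection P := isStarProjection_vecMulVec_self_star hφ
  have hP0 : P.PosSemidef := posSemidef_vecMulVec_self_star φ
  have hpovm : IsPOVM ![P, 1 - P] := isPOVM_vecMulVec_self_star hφ
  apply le_antisymm
  · refine iSup_le fun m => iSup_le fun M => iSup_le fun hM => ?_
    simp only [P, trace_vecMulVec_mul]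
    rw [sum_gfun_falpha hα0 hα1 (fun x => (hM.1 x).re_dotProduct_mulVec_nonneg φ)
      (fun x => h2.re_trace_mul_nonneg_s15 (hM.1 x)), EReal.coe_le_coe_iff, neg_le_neg_iff]
    exact h2.rpow_re_dotProduct_mulVec_le_sum hα0 hα hM.1 hM.2 hφ
  · refine le_iSup_of_le 2 (le_iSup_of_le _ (le_iSup_of_le hpovm (le_of_eq ?_)))
    rw [sum_gfun_falpha hα0 hα1 (fun x => hP0.re_trace_mul_nonneg_s15 (hpovm.1 x))
      (fun x => h2.re_trace_mul_nonneg_s15 (hpovm.1 x)), Fin.sum_univ_two]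
    simp [hP.isIdempotentElem.eq, hP.mul_one_sub_self, trace_mul_comm ρ2, P, trace_vecMulVec_mul,
      dotProduct_comm φ, hφ, Real.zero_rpow hα0.ne']

/-- for `0 < α ≤ 1/2` and a pure first argument,
`D_{f_α}^min(|φ⟩⟨φ| ‖ ρ2) = −⟨φ|ρ2|φ⟩^{1−α}`. -/
theorem stmt_15 (α : ℝ) (hα0 : 0 < α) (hα : α ≤ 1/2)
    {n : ℕ} (φ : Fin n → ℂ) (hφ : star φ ⬝ᵥ φ = 1)
    (ρ2 : Matrix (Fin n) (Fin n) ℂ) (h2 : ρ2.PosSemidef) (h2t : ρ2.trace = 1)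
    (hne : star φ ⬝ᵥ ρ2.mulVec φ ≠ 0) :
    Dfmin (falpha α) (Matrix.vecMulVec φ (star φ)) ρ2 =
      ((-(((star φ ⬝ᵥ ρ2.mulVec φ).re) ^ (1 - α)) : ℝ) : EReal) :=
  stmt_15_general α hα0 hα φ hφ ρ2 h2
end
end
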